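/- Let $k$ be a field of characteristic $p$, $F$ and $G$ one-dimensional formal group laws over $k$, and $\phi : F \to G$ a nonzero homomorphism. If $F$ has finite height $n$ and $G$ has finite height $m$, then $n = m$; i.e., a nonzero homomorphism of one-dimensional formal groups over a field of characteristic $p$ can only exist between formal groups of the same height. -/

import Mathlib

/-! Basic theory of one-dimensional formal group laws via explicit substitution
of (multivariable) power series. -/

noncomputable section

open Finset

variable {R : Type} [CommRing R]

/-- The total degree of a monomial exponent. -/
def expDeg {σ : Type} (m : σ →₀ ℕ) : ℕ := m.sum fun _ e => e

/-- Substitution of a multivariable power series `F` (with zero constant term)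
into a one-variable power series `φ`, i.e. `φ(F)`.  The coefficient of a
monomial `m` in `φ(F)` only involves `coeff k φ` for `k ≤ deg m` when `F` has
zero constant term, which justifies the finite sum. -/
def substOne (φ : PowerSeries R) {σ : Type} (F : MvPowerSeries σ R) :
    MvPowerSeries σ R :=
  fun m => ∑ k ∈ Finset.range (expDeg m + 1),
    (PowerSeries.coeff k φ) * (MvPowerSeries.coeff m (F ^ k))

/-- Substitution of two power series `a`, `b` (with zero constant terms) into a
two-variable power series `F`, i.e. `F(a,b)`. -/
def subst2 (F : MvPowerSeries (Fin 2) R) {σ : Type} (a b : MvPowerSeries σ R) :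
    MvPowerSeries σ R :=
  fun m => ∑ ij ∈ Finset.range (expDeg m + 1) ×ˢ Finset.range (expDeg m + 1),
    (MvPowerSeries.coeff (Finsupp.single (0 : Fin 2) ij.1 + Finsupp.single (1 : Fin 2) ij.2) F) *
      (MvPowerSeries.coeff m (a ^ ij.1 * b ^ ij.2))

/-- A one-dimensional (commutative) formal group law over `R`. -/
structure IsFGL (F : MvPowerSeries (Fin 2) R) : Prop where
  constant : MvPowerSeries.constantCoeff F = 0
  left_unit : subst2 F (MvPowerSeries.X (0 : Fin 2)) 0 = MvPowerSeries.X (0 : Fin 2)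
  right_unit : subst2 F 0 (MvPowerSeries.X (1 : Fin 2)) = MvPowerSeries.X (1 : Fin 2)
  comm : subst2 F (MvPowerSeries.X (1 : Fin 2)) (MvPowerSeries.X (0 : Fin 2)) = F
  assoc : subst2 F (subst2 F (MvPowerSeries.X (0 : Fin 3)) (MvPowerSeries.X (1 : Fin 3)))
      (MvPowerSeries.X (2 : Fin 3)) =
    subst2 F (MvPowerSeries.X (0 : Fin 3))
      (subst2 F (MvPowerSeries.X (1 : Fin 3)) (MvPowerSeries.X (2 : Fin 3)))

/-- `φ` is a homomorphism of formal group laws `F → G`:  `φ(F(x,y)) = G(φ(x), φ(y))`. -/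
def IsFGLHom (F G : MvPowerSeries (Fin 2) R) (φ : PowerSeries R) : Prop :=
  PowerSeries.constantCoeff φ = 0 ∧
    substOne φ F =
      subst2 G (substOne φ (MvPowerSeries.X (0 : Fin 2))) (substOne φ (MvPowerSeries.X (1 : Fin 2)))

/-- The `m`-series `[m]_F(x)` of a formal group law, defined by `[0] = 0`,
`[m+1](x) = F([m](x), x)`. -/
def mulSer (F : MvPowerSeries (Fin 2) R) : ℕ → PowerSeries R
  | 0 => 0
  | m + 1 => subst2 F (mulSer F m) PowerSeries.X

/-- `F` has height `n` (at the prime `p`): the `p`-series is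
`c·x^{p^n} + (higher terms)` with `c ≠ 0`. -/
def HasHeight (F : MvPowerSeries (Fin 2) R) (p n : ℕ) : Prop :=
  (∀ m < p ^ n, PowerSeries.coeff m (mulSer F p) = 0) ∧
    PowerSeries.coeff (p ^ n) (mulSer F p) ≠ 0

end

/-! A homomorphism intertwines the `p`-series, `φ([p]_F(x)) = [p]_G(φ(x))`, by induction on
the multiplier and associativity of substitution. Over a domain the order of a composite
`f(g(x))` with `g(0) = 0` is `ord f · ord g`, so with `r = ord φ` comparing orders gives
`r · p^n = p^m · r`, and `r ≥ 1` because `φ(0) = 0` and `φ ≠ 0`. -/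

lemma Finsupp.equivFunOnFinite_symm_fin_two {M : Type*} [AddZeroClass M] (i j : M) :
    Finsupp.equivFunOnFinite.symm ![i, j] = Finsupp.single 0 i + Finsupp.single 1 j := by
  ext k
  fin_cases k <;> simp

namespace MvPowerSeries

section Semiring

variable {R σ : Type*} [Semiring R]

lemma coeff_pow_eq_zero_of_degree_lt {f : MvPowerSeries σ R} (hf : constantCoeff f = 0)
    {k : ℕ} {m : σ →₀ ℕ} (h : m.degree < k) : coeff m (f ^ k) = 0 :=
  coeff_of_lt_order ((Nat.cast_lt.mpr h).trans_le (le_order_pow_of_constantCoeff_eq_zero k hf))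

lemma coeff_pow_mul_pow_eq_zero_of_degree_lt {a b : MvPowerSeries σ R}
    (ha : constantCoeff a = 0) (hb : constantCoeff b = 0) {i j : ℕ} {m : σ →₀ ℕ}
    (h : m.degree < i + j) : coeff m (a ^ i * b ^ j) = 0 := by
  refine coeff_of_lt_order ((Nat.cast_lt.mpr h).trans_le ?_)
  calc ((i + j : ℕ) : ℕ∞) ≤ (a ^ i).order + (b ^ j).order := by
        push_cast
        exact add_le_add (le_order_pow_of_constantCoeff_eq_zero i ha)
          (le_order_pow_of_constantCoeff_eq_zero j hb)
    _ ≤ (a ^ i * b ^ j).order := le_order_mul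

end Semiring

variable {R σ : Type*} [CommRing R]

lemma hasSubst_fin_two {a b : MvPowerSeries σ R} (ha : constantCoeff a = 0)
    (hb : constantCoeff b = 0) : HasSubst ![a, b] :=
  hasSubst_of_constantCoeff_zero (Fin.forall_fin_two.mpr ⟨ha, hb⟩)

lemma subst_subst_X {τ : Type*} {s : σ → MvPowerSeries τ R} (hs : HasSubst s)
    (φ : PowerSeries R) (i : σ) : (φ.subst (X i : MvPowerSeries σ R)).subst s = φ.subst (s i) := by
  rw [PowerSeries.subst, subst_comp_subst_apply (PowerSeries.HasSubst.X i).const hs, subst_X hs]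
  rfl

end MvPowerSeries

open MvPowerSeries

section Substitution

variable {R : Type} [CommRing R] {σ : Type}

lemma substOne_eq_subst (φ : PowerSeries R) {f : MvPowerSeries σ R} (hf : constantCoeff f = 0) :
    substOne φ f = φ.subst f := by
  ext m
  rw [PowerSeries.coeff_subst (PowerSeries.HasSubst.of_constantCoeff_zero hf),
    finsum_eq_sum_of_support_subset (s := Finset.range (expDeg m + 1))]
  · rfl
  · intro k hk
    by_contra hkm
    simp only [Finset.coe_range, Set.mem_Iio, not_lt, Nat.succ_le_iff] at hkm
    exact hk (by simp only [coeff_pow_eq_zero_of_degree_lt hf hkm, smul_zero])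

lemma subst2_eq_subst (F : MvPowerSeries (Fin 2) R) {a b : MvPowerSeries σ R}
    (ha : constantCoeff a = 0) (hb : constantCoeff b = 0) :
    subst2 F a b = F.subst ![a, b] := by
  ext m
  have hterm : ∀ ij : ℕ × ℕ,
      coeff ((finTwoArrowEquiv' ℕ).symm ij) F •
        coeff m (((finTwoArrowEquiv' ℕ).symm ij).prod fun s e => ![a, b] s ^ e) =
      coeff (Finsupp.single 0 ij.1 + Finsupp.single 1 ij.2) F * coeff m (a ^ ij.1 * b ^ ij.2) := by
    intro ij
    simp [Finsupp.equivFunOnFinite_symm_fin_two]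
  rw [coeff_subst (hasSubst_fin_two ha hb), ← finsum_comp_equiv (finTwoArrowEquiv' ℕ).symm,
    finsum_congr hterm, finsum_eq_sum_of_support_subset
      (s := Finset.range (expDeg m + 1) ×ˢ Finset.range (expDeg m + 1))]
  · rfl
  · rintro ⟨i, j⟩ hij
    by_contra hmem
    simp only [Finset.coe_product, Finset.coe_range, Set.mem_prod, Set.mem_Iio, not_and_or,
      not_lt, Nat.succ_le_iff] at hmem
    refine hij (mul_eq_zero_of_right _ (coeff_pow_mul_pow_eq_zero_of_degree_lt ha hb ?_))
    change expDeg m < i + j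
    omega

end Substitution

namespace PowerSeries

variable {R : Type*} [CommRing R]

lemma constantCoeff_subst_of_constantCoeff_eq_zero {τ : Type*} {a : MvPowerSeries τ R}
    (ha : MvPowerSeries.constantCoeff a = 0) (f : PowerSeries R) :
    MvPowerSeries.constantCoeff (subst a f) = constantCoeff f := by
  rw [constantCoeff_subst (HasSubst.of_constantCoeff_zero ha), finsum_eq_single _ 0]
  · simp
  · intro d hd
    simp [ha, zero_pow hd]

lemma order_eq_zero_of_constantCoeff_ne_zero {f : PowerSeries R} (hf : constantCoeff f ≠ 0) :
    f.order = 0 :=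
  order_eq_nat.mpr ⟨by rwa [coeff_zero_eq_constantCoeff_apply],
    fun _ hi => absurd hi (Nat.not_lt_zero _)⟩

lemma order_subst [IsDomain R] {f g : PowerSeries R} (hf : f ≠ 0) (hg : constantCoeff g = 0) :
    order (f.subst g) = f.order * g.order := by
  have hsubst : HasSubst g := HasSubst.of_constantCoeff_zero hg
  have hfactor : f.subst g = g ^ f.order.toNat * f.divXPowOrder.subst g := by
    conv_lhs => rw [← X_pow_order_mul_divXPowOrder (f := f)]
    rw [subst_mul hsubst, subst_pow hsubst, subst_X hsubst]
  have hunit : order (f.divXPowOrder.subst g) = 0 :=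
    order_eq_zero_of_constantCoeff_ne_zero
      ((constantCoeff_subst_of_constantCoeff_eq_zero hg _).trans_ne
        (constantCoeff_divXPowOrder_eq_zero_iff.not.mpr hf))
  rw [hfactor, order_mul, order_pow, hunit, add_zero, nsmul_eq_mul,
    ENat.natCast_toNat (order_eq_top.not.mpr hf)]

end PowerSeries

section FormalGroupLaw

variable {R : Type} [CommRing R] {F G : MvPowerSeries (Fin 2) R}

lemma constantCoeff_mulSer (hF : constantCoeff F = 0) (c : ℕ) :
    PowerSeries.constantCoeff (mulSer F c) = 0 := by
  induction c with
  | zero => simp [mulSer]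
  | succ c ih =>
    rw [mulSer, subst2_eq_subst F ih PowerSeries.constantCoeff_X]
    exact constantCoeff_subst_eq_zero (hasSubst_fin_two ih PowerSeries.constantCoeff_X)
      (Fin.forall_fin_two.mpr ⟨ih, PowerSeries.constantCoeff_X⟩) hF

lemma mulSer_succ_eq_subst (hF : constantCoeff F = 0) (c : ℕ) :
    mulSer F (c + 1) = F.subst ![mulSer F c, PowerSeries.X] :=
  subst2_eq_subst F (constantCoeff_mulSer hF c) PowerSeries.constantCoeff_X

lemma HasHeight.order_mulSer {p n : ℕ} (h : HasHeight F p n) :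
    (mulSer F p).order = (p ^ n : ℕ) :=
  PowerSeries.order_eq_nat.mpr ⟨h.2, h.1⟩

variable {φ : PowerSeries R}

lemma IsFGLHom.constantCoeff_subst_X (hφ : IsFGLHom F G φ) (i : Fin 2) :
    constantCoeff (φ.subst (X i : MvPowerSeries (Fin 2) R)) = 0 :=
  PowerSeries.constantCoeff_subst_eq_zero (constantCoeff_X i) φ hφ.1

lemma IsFGLHom.subst_eq (hF : constantCoeff F = 0) (hφ : IsFGLHom F G φ) :
    φ.subst F = G.subst ![φ.subst (X 0 : MvPowerSeries (Fin 2) R), φ.subst (X 1)] := by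
  have h := hφ.2
  rwa [substOne_eq_subst φ hF, substOne_eq_subst φ (constantCoeff_X 0),
    substOne_eq_subst φ (constantCoeff_X 1),
    subst2_eq_subst G (hφ.constantCoeff_subst_X 0) (hφ.constantCoeff_subst_X 1)] at h

lemma IsFGLHom.subst_mulSer (hF : constantCoeff F = 0) (hG : constantCoeff G = 0)
    (hφ : IsFGLHom F G φ) (c : ℕ) : φ.subst (mulSer F c) = (mulSer G c).subst φ := by
  have hφ0 : PowerSeries.HasSubst φ := PowerSeries.HasSubst.of_constantCoeff_zero hφ.1
  induction c with
  | zero =>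
    rw [mulSer, mulSer, PowerSeries.subst_zero_of_constantCoeff_zero hφ.1,
      ← PowerSeries.coe_substAlgHom hφ0, map_zero]
  | succ c ih =>
    have hsF := hasSubst_fin_two (constantCoeff_mulSer hF c) PowerSeries.constantCoeff_X
    have hsG := hasSubst_fin_two (constantCoeff_mulSer hG c) PowerSeries.constantCoeff_X
    calc φ.subst (mulSer F (c + 1))
        = (φ.subst F).subst ![mulSer F c, PowerSeries.X] := by
          rw [mulSer_succ_eq_subst hF]
          simp only [PowerSeries.subst_def]
          rw [subst_comp_subst_apply (PowerSeries.HasSubst.of_constantCoeff_zero hF).const hsF]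
      _ = G.subst ![φ.subst (mulSer F c), φ] := by
          rw [hφ.subst_eq hF, subst_comp_subst_apply
            (hasSubst_fin_two (hφ.constantCoeff_subst_X 0) (hφ.constantCoeff_subst_X 1)) hsF]
          congr 1
          funext i
          fin_cases i
          · exact subst_subst_X hsF φ 0
          · exact (subst_subst_X hsF φ 1).trans (PowerSeries.X_subst φ)
      _ = (mulSer G (c + 1)).subst φ := by
          rw [ih, mulSer_succ_eq_subst hG, PowerSeries.subst_def φ (subst _ G),
            subst_comp_subst_apply hsG hφ0.const]
          congr 1
          funext i
          fin_cases i
          · rfl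
          · exact (PowerSeries.subst_X hφ0).symm

end FormalGroupLaw

theorem height_eq_of_nonzero_hom_general
    (k : Type) [Field k] (p : ℕ) (hp : p.Prime)
    (F G : MvPowerSeries (Fin 2) k) (hF : IsFGL F) (hG : IsFGL G)
    (φ : PowerSeries k) (hφ : IsFGLHom F G φ) (hne : φ ≠ 0)
    (n m : ℕ) (hhtF : HasHeight F p n) (hhtG : HasHeight G p m) :
    n = m := by
  have hGp : mulSer G p ≠ 0 := fun h => hhtG.2 (by simp [h])
  obtain ⟨r, hr⟩ := ENat.ne_top_iff_exists.mp (PowerSeries.order_eq_top.not.mpr hne)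
  have hr0 : r ≠ 0 := by
    rintro rfl
    exact PowerSeries.order_ne_zero_iff_constCoeff_eq_zero.mpr hφ.1 hr.symm
  have hord := congrArg PowerSeries.order (hφ.subst_mulSer hF.constant hG.constant p)
  rw [PowerSeries.order_subst hne (constantCoeff_mulSer hF.constant p),
    PowerSeries.order_subst hGp hφ.1, hhtF.order_mulSer, hhtG.order_mulSer, ← hr] at hord
  norm_cast at hord
  exact Nat.pow_right_injective hp.two_le
    (Nat.eq_of_mul_eq_mul_left (Nat.pos_of_ne_zero hr0) (hord.trans (mul_comm _ _)))

/-- A nonzero homomorphism of one-dimensional formal group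
laws over a field of characteristic `p` can only exist between formal groups of
the same height. -/
theorem height_eq_of_nonzero_hom
    (k : Type) [Field k] (p : ℕ) (hp : p.Prime) [CharP k p]
    (F G : MvPowerSeries (Fin 2) k) (hF : IsFGL F) (hG : IsFGL G)
    (φ : PowerSeries k) (hφ : IsFGLHom F G φ) (hne : φ ≠ 0)
    (n m : ℕ) (hhtF : HasHeight F p n) (hhtG : HasHeight G p m) :
    n = m :=
  height_eq_of_nonzero_hom_general k p hp F G hF hG φ hφ hne n m hhtF hhtG
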